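/- Let X be a real Banach space and let {(x_n, f_n)}_{n∈ℕ} be a Hilbert-Schauder frame of X with Hilbert-Schauder frame operator S. Then {(f_n, x_n)}_{n∈ℕ} is a Schauder frame of the norm-closed linear span Y of {f_n : n ∈ ℕ} in X*: for every f ∈ Y, the partial sums Σ_{j≤N} f(x_j) f_j converge in the norm of X* to f (here x_j acts on X* by evaluation, f ↦ f(x_j)). -/

import Mathlib

open Filter Topology

/-- A Schauder frame of a real Banach space `X`: for every `v ∈ X`, the partial sums
`∑_{j < N} f j (v) • x j` converge to `v` in norm. -/
def SchauderFrame {X : Type*} [NormedAddCommGroup X] [NormedSpace ℝ X]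
    (x : ℕ → X) (f : ℕ → X →L[ℝ] ℝ) : Prop :=
  ∀ v : X, Tendsto (fun N => ∑ j ∈ Finset.range N, f j v • x j) atTop (𝓝 v)

/-!
The partial sum operators `Pₙ = ∑_{j<N} fⱼ ⊗ xⱼ` converge strongly to the identity, so they are
uniformly bounded by Banach–Steinhaus. The swapped partial sums are `g ↦ g ∘ Pₙ`, a uniformly
bounded, hence equicontinuous, family on `X*`; the set where it converges to the identity is
therefore a closed subspace, and it suffices to check each `fₖ`. Since
`S u v = lim ∑ fⱼ(u) fⱼ(v)` is symmetric, `fₖ(xⱼ) = S xₖ xⱼ = S xⱼ xₖ = fⱼ(xₖ)`, whence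
`∑_{j<N} fₖ(xⱼ) fⱼ = S (Pₙ xₖ) → S xₖ = fₖ`.
-/

section ConvergenceSubmodule

variable {ι 𝕜 E F : Type*} [Semiring 𝕜] [TopologicalSpace E] [AddCommGroup E] [Module 𝕜 E]
  [AddCommGroup F] [UniformSpace F] [IsUniformAddGroup F] [Module 𝕜 F] [ContinuousConstSMul 𝕜 F]

def ContinuousLinearMap.convergenceSubmodule (T : ι → E →L[𝕜] F) (l : Filter ι)
    (T₀ : E →L[𝕜] F) : Submodule 𝕜 E where
  carrier := {y | Tendsto (fun i => T i y) l (𝓝 (T₀ y))}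
  zero_mem' := by simp [tendsto_const_nhds]
  add_mem' {a b} ha hb := by simpa using ha.add hb
  smul_mem' c a ha := by simpa using ha.const_smul c

theorem ContinuousLinearMap.tendsto_of_mem_topologicalClosure_span [ContinuousAdd E]
    [ContinuousConstSMul 𝕜 E] {T : ι → E →L[𝕜] F}
    {l : Filter ι} {T₀ : E →L[𝕜] F} (hT : Equicontinuous fun i => ⇑(T i)) {s : Set E}
    (hs : ∀ y ∈ s, Tendsto (fun i => T i y) l (𝓝 (T₀ y))) {y : E}
    (hy : y ∈ (Submodule.span 𝕜 s).topologicalClosure) :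
    Tendsto (fun i => T i y) l (𝓝 (T₀ y)) := by
  have hclosed : IsClosed (convergenceSubmodule T l T₀ : Set E) :=
    hT.isClosed_setOfPred_tendsto T₀.continuous
  have hspan : Submodule.span 𝕜 s ≤ convergenceSubmodule T l T₀ := Submodule.span_le.mpr hs
  exact Submodule.topologicalClosure_minimal _ hspan hclosed hy

end ConvergenceSubmodule

namespace SchauderFrame

variable {X : Type*} [NormedAddCommGroup X] [NormedSpace ℝ X] {x : ℕ → X} {f : ℕ → X →L[ℝ] ℝ}

variable (x f) in
noncomputable def partialSum (N : ℕ) : X →L[ℝ] X :=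
  ∑ j ∈ Finset.range N, (f j).smulRight (x j)

@[simp]
theorem partialSum_apply (N : ℕ) (v : X) :
    partialSum x f N v = ∑ j ∈ Finset.range N, f j v • x j := by
  simp [partialSum]

theorem tendsto_partialSum (hframe : SchauderFrame x f) (v : X) :
    Tendsto (fun N => partialSum x f N v) atTop (𝓝 v) := by
  simpa using hframe v

theorem exists_norm_partialSum_le [CompleteSpace X] (hframe : SchauderFrame x f) :
    ∃ C, ∀ N, ‖partialSum x f N‖ ≤ C :=
  banach_steinhaus fun v =>
    ((hframe.tendsto_partialSum v).norm.bddAbove_range).imp fun _ hC N => hC ⟨N, rfl⟩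

variable (x f) in
noncomputable def dualPartialSum (N : ℕ) : (X →L[ℝ] ℝ) →L[ℝ] X →L[ℝ] ℝ :=
  (ContinuousLinearMap.compL ℝ X X ℝ).flip (partialSum x f N)

@[simp]
theorem dualPartialSum_apply (N : ℕ) (g : X →L[ℝ] ℝ) :
    dualPartialSum x f N g = ∑ j ∈ Finset.range N, g (x j) • f j := by
  ext v
  simp [dualPartialSum, mul_comm]

theorem equicontinuous_dualPartialSum [CompleteSpace X] (hframe : SchauderFrame x f) :
    Equicontinuous fun N => ⇑(dualPartialSum x f N) := by
  obtain ⟨C, hC⟩ := hframe.exists_norm_partialSum_le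
  have hbound : ∃ C, ∀ N g, ‖dualPartialSum x f N g‖ ≤ C * ‖g‖ := ⟨C, fun N g =>
    calc ‖g.comp (partialSum x f N)‖ ≤ ‖g‖ * ‖partialSum x f N‖ := g.opNorm_comp_le _
      _ ≤ C * ‖g‖ := by rw [mul_comm]; gcongr; exact hC N⟩
  exact ((NormedSpace.equicontinuous_TFAE _).out 3 1).mp hbound

theorem tendsto_apply_partialSum {S : X →L[ℝ] X →L[ℝ] ℝ} (hframe : SchauderFrame x f)
    (u : X) : Tendsto (fun N => S (partialSum x f N u)) atTop (𝓝 (S u)) :=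
  (S.continuous.tendsto u).comp (hframe.tendsto_partialSum u)

theorem tendsto_sum_mul {S : X →L[ℝ] X →L[ℝ] ℝ} (hframe : SchauderFrame x f)
    (hS : ∀ j, S (x j) = f j) (u v : X) :
    Tendsto (fun N => ∑ j ∈ Finset.range N, f j u * f j v) atTop (𝓝 (S u v)) := by
  have h := ((continuous_eval_const v).tendsto (S u)).comp
    (hframe.tendsto_apply_partialSum (S := S) u)
  convert h using 2 with N
  simp [map_sum, hS]

theorem apply_comm {S : X →L[ℝ] X →L[ℝ] ℝ} (hframe : SchauderFrame x f)
    (hS : ∀ j, S (x j) = f j) (u v : X) : S u v = S v u :=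
  tendsto_nhds_unique (hframe.tendsto_sum_mul hS u v) <| by
    simpa only [mul_comm] using hframe.tendsto_sum_mul hS v u

theorem frame_apply_comm {S : X →L[ℝ] X →L[ℝ] ℝ} (hframe : SchauderFrame x f)
    (hS : ∀ j, S (x j) = f j) (j k : ℕ) : f k (x j) = f j (x k) := by
  rw [← hS k, ← hS j, hframe.apply_comm hS]

theorem tendsto_sum_frame_apply_smul {S : X →L[ℝ] X →L[ℝ] ℝ} (hframe : SchauderFrame x f)
    (hS : ∀ j, S (x j) = f j) (k : ℕ) :
    Tendsto (fun N => ∑ j ∈ Finset.range N, f k (x j) • f j) atTop (𝓝 (f k)) := by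
  have h := hframe.tendsto_apply_partialSum (S := S) (x k)
  rw [hS k] at h
  convert h using 2 with N
  simp [map_sum, hS, hframe.frame_apply_comm hS]

end SchauderFrame

/-- For a Hilbert-Schauder frame `{(xₙ, fₙ)}` of `X`, the swapped system `{(fₙ, xₙ)}`
is a Schauder frame of the norm-closed linear span of `{fₙ}` in `X*`. -/
theorem hsf_frame_dual_frame
    {X : Type*} [NormedAddCommGroup X] [NormedSpace ℝ X] [CompleteSpace X]
    (x : ℕ → X) (f : ℕ → X →L[ℝ] ℝ) (hframe : SchauderFrame x f)
    (S : X →L[ℝ] X →L[ℝ] ℝ) (hS : ∀ j, S (x j) = f j) :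
    ∀ g : X →L[ℝ] ℝ, g ∈ (Submodule.span ℝ (Set.range f)).topologicalClosure →
      Tendsto (fun N => ∑ j ∈ Finset.range N, g (x j) • f j) atTop (𝓝 g) := by
  intro g hg
  have hframe_elem : ∀ h ∈ Set.range f,
      Tendsto (fun N => SchauderFrame.dualPartialSum x f N h) atTop (𝓝 h) := by
    rintro _ ⟨k, rfl⟩
    simpa using hframe.tendsto_sum_frame_apply_smul hS k
  simpa using ContinuousLinearMap.tendsto_of_mem_topologicalClosure_span
    (T₀ := ContinuousLinearMap.id ℝ _) hframe.equicontinuous_dualPartialSum hframe_elem hg
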